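/- Let n ≥ 2 be even, m > 1, and G a non-regular bipartite graph of order m in which all vertices of one partite set have common degree a and all vertices of the other partite set have common degree b, with a ≠ b. Then χ_ld(G[\overline{K_n}]) = 2. -/

import Mathlib

open Finset

open Classical in
/-- The weight of a vertex: sum of labels of its neighbors. -/
noncomputable def ldWeight {V : Type*} (G : SimpleGraph V) [Fintype V] (f : V → ℕ) (v : V) : ℕ :=
  ∑ x ∈ Finset.univ, if G.Adj v x then f x else 0

/-- `f` is a local distance antimagic labeling of `G`: a bijection onto `{1,…,|V|}`
with adjacent vertices getting distinct weights. -/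
def IsLDAL {V : Type*} (G : SimpleGraph V) [Fintype V] (f : V → ℕ) : Prop :=
  Set.BijOn f Set.univ (Set.Icc 1 (Fintype.card V)) ∧
    ∀ ⦃u v : V⦄, G.Adj u v → ldWeight G f u ≠ ldWeight G f v

/-- The local distance antimagic chromatic number: minimum number of distinct weights. -/
noncomputable def chiLD {V : Type*} (G : SimpleGraph V) [Fintype V] : ℕ :=
  sInf {k | ∃ f : V → ℕ, IsLDAL G f ∧ (Finset.univ.image (ldWeight G f)).card = k}

/-- The join `G + H` of two graphs. -/
def graphJoin {α β : Type*} (G : SimpleGraph α) (H : SimpleGraph β) :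
    SimpleGraph (α ⊕ β) where
  Adj x y :=
    match x, y with
    | Sum.inl a, Sum.inl b => G.Adj a b
    | Sum.inr a, Sum.inr b => H.Adj a b
    | Sum.inl _, Sum.inr _ => True
    | Sum.inr _, Sum.inl _ => True
  symm := by
    constructor
    rintro (a | a) (b | b) h
    exacts [h.symm, trivial, trivial, h.symm]
  loopless := by
    constructor
    rintro (a | a) h
    exacts [G.loopless.irrefl a h, H.loopless.irrefl a h]

/-- The lexicographic product `G[H]`. -/
def lexProd {α β : Type*} (G : SimpleGraph α) (H : SimpleGraph β) :
    SimpleGraph (α × β) where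
  Adj x y := G.Adj x.1 y.1 ∨ (x.1 = y.1 ∧ H.Adj x.2 y.2)
  symm := by
    constructor
    rintro x y (h | ⟨e, h⟩)
    exacts [Or.inl h.symm, Or.inr ⟨e.symm, h.symm⟩]
  loopless := by
    constructor
    rintro x (h | ⟨e, h⟩)
    exacts [G.loopless.irrefl _ h, H.loopless.irrefl _ h]

/-- The friendship graph `F_n`: `n` triangles sharing the central vertex `none`. -/
def friendship (n : ℕ) : SimpleGraph (Option (Fin n × Fin 2)) where
  Adj x y := x ≠ y ∧ (x = none ∨ y = none ∨ ∃ i a b, x = some (i, a) ∧ y = some (i, b))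
  symm := by
    constructor
    rintro x y ⟨hne, h⟩
    refine ⟨hne.symm, ?_⟩
    rcases h with h | h | ⟨i, a, b, hx, hy⟩
    · exact Or.inr (Or.inl h)
    · exact Or.inl h
    · exact Or.inr (Or.inr ⟨i, b, a, hy, hx⟩)
  loopless := ⟨fun x h => h.1 rfl⟩

/-- The bistar `B_{n,n}`: two adjacent centers, each with `n` leaves. -/
def bistar (n : ℕ) : SimpleGraph (Bool ⊕ Bool × Fin n) where
  Adj x y :=
    match x, y with
    | Sum.inl a, Sum.inl b => a ≠ b
    | Sum.inl a, Sum.inr (c, _) => a = c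
    | Sum.inr (c, _), Sum.inl a => a = c
    | Sum.inr _, Sum.inr _ => False
  symm := by
    constructor
    rintro (a | ⟨c, i⟩) (b | ⟨d, j⟩) h
    exacts [h.symm, h, h, h.elim]
  loopless := by
    constructor
    rintro (a | ⟨c, i⟩) h
    exacts [h rfl, h]

/-!
Number `V × Fin (2k)` by `1, …, 2k|V|` so that the column `{u} × Fin (2k)` consists of `k`
complementary pairs `x, 2k|V| + 1 - x` (rows `r` and `k + r` of the paper's matrix). All column
sums are then the same `C > 0`, and since `(v, i)` is adjacent in `G[K̄_{2k}]` to whole columns, one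
for each neighbour of `v`, its weight is `deg v · C`. If the two sides of the bipartition have
degrees `a ≠ b`, adjacent vertices get distinct weights and exactly the weights `aC, bC` occur;
two weights are necessary as soon as there is an edge.
-/

section Labeling

variable {α : Type*} [Fintype α]

theorem bijOn_val_add_one_Icc {N : ℕ} (e : α ≃ Fin N) :
    Set.BijOn (fun x => (e x : ℕ) + 1) Set.univ (Set.Icc 1 (Fintype.card α)) := by
  rw [Fintype.card_congr e, Fintype.card_fin]
  refine ⟨fun x _ => ⟨Nat.le_add_left _ _, (e x).isLt⟩,
    fun x _ y _ h => e.injective (Fin.ext (Nat.add_right_cancel h)),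
    fun y hy => ⟨e.symm ⟨y - 1, by grind⟩, trivial, ?_⟩⟩
  simp only [Equiv.apply_symm_apply]
  grind

variable (V : Type*) [Fintype V] (k : ℕ)

noncomputable def complementaryEquiv :
    V × Fin (k + k) ≃ Fin (Fintype.card (V × Fin k) + Fintype.card (V × Fin k)) :=
  let σ := Fintype.equivFin (V × Fin k)
  (Equiv.prodCongrRight fun _ => finSumFinEquiv.symm).trans <|
    (Equiv.prodSumDistrib V (Fin k) (Fin k)).trans <|
      (σ.sumCongr (σ.trans Fin.revPerm)).trans finSumFinEquiv

theorem complementaryEquiv_add (u : V) (r : Fin k) :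
    (complementaryEquiv V k (u, Fin.castAdd k r) : ℕ) + complementaryEquiv V k (u, Fin.natAdd k r)
      + 1 = Fintype.card (V × Fin k) + Fintype.card (V × Fin k) := by
  have hlt := (Fintype.equivFin (V × Fin k) (u, r)).isLt
  simp only [complementaryEquiv, Equiv.trans_apply, Equiv.prodCongrRight_apply,
    finSumFinEquiv_symm_apply_castAdd, finSumFinEquiv_symm_apply_natAdd,
    Equiv.prodSumDistrib_apply_left, Equiv.prodSumDistrib_apply_right, Equiv.sumCongr_apply,
    Sum.map_inl, Sum.map_inr, finSumFinEquiv_apply_left, finSumFinEquiv_apply_right,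
    Fin.revPerm_apply, Fin.val_castAdd, Fin.val_natAdd, Fin.val_rev]
  omega

noncomputable def complementaryLabeling (p : V × Fin (k + k)) : ℕ :=
  complementaryEquiv V k p + 1

theorem complementaryLabeling_bijOn :
    Set.BijOn (complementaryLabeling V k) Set.univ
      (Set.Icc 1 (Fintype.card (V × Fin (k + k)))) :=
  bijOn_val_add_one_Icc (complementaryEquiv V k)

theorem sum_complementaryLabeling (u : V) :
    ∑ i, complementaryLabeling V k (u, i) = k * (Fintype.card (V × Fin (k + k)) + 1) := by
  have hcard : Fintype.card (V × Fin (k + k)) =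
      Fintype.card (V × Fin k) + Fintype.card (V × Fin k) := by
    rw [Fintype.card_congr (complementaryEquiv V k), Fintype.card_fin]
  rw [Fin.sum_univ_add, ← Finset.sum_add_distrib]
  calc ∑ r : Fin k, (complementaryLabeling V k (u, Fin.castAdd k r)
          + complementaryLabeling V k (u, Fin.natAdd k r))
      _ = ∑ _r : Fin k, (Fintype.card (V × Fin (k + k)) + 1) := by
        refine Finset.sum_congr rfl fun r _ => ?_
        have := complementaryEquiv_add V k u r
        simp only [complementaryLabeling]
        omega
      _ = k * (Fintype.card (V × Fin (k + k)) + 1) := by simp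

end Labeling

section LexProdBot

theorem lexProd_bot_adj {V W : Type*} (G : SimpleGraph V) {p q : V × W} :
    (lexProd G (⊥ : SimpleGraph W)).Adj p q ↔ G.Adj p.1 q.1 :=
  or_iff_left fun h => h.2

variable {V W : Type*} [Fintype V] [Fintype W] (G : SimpleGraph V) [DecidableRel G.Adj]

theorem ldWeight_lexProd_bot {f : V × W → ℕ} {C : ℕ} (hcol : ∀ u, ∑ i, f (u, i) = C)
    (p : V × W) : ldWeight (lexProd G (⊥ : SimpleGraph W)) f p = G.degree p.1 * C := by
  classical
  calc ldWeight (lexProd G (⊥ : SimpleGraph W)) f p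
      = ∑ u, if G.Adj p.1 u then ∑ i, f (u, i) else 0 := by
        rw [ldWeight, Fintype.sum_prod_type]
        refine Finset.sum_congr rfl fun u _ => ?_
        simp only [lexProd_bot_adj]
        split_ifs <;> simp
    _ = G.degree p.1 * C := by
        simp only [hcol, ← Finset.sum_filter, Finset.sum_const, smul_eq_mul,
          ← SimpleGraph.neighborFinset_eq_filter, SimpleGraph.card_neighborFinset_eq_degree]

variable (k : ℕ)

theorem isLDAL_lexProd_bot_complementaryLabeling (hk : 0 < k)
    (hdeg : ∀ ⦃u v⦄, G.Adj u v → G.degree u ≠ G.degree v) :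
    IsLDAL (lexProd G (⊥ : SimpleGraph (Fin (k + k)))) (complementaryLabeling V k) := by
  refine ⟨complementaryLabeling_bijOn V k, fun p q hpq => ?_⟩
  rw [ldWeight_lexProd_bot G (sum_complementaryLabeling V k),
    ldWeight_lexProd_bot G (sum_complementaryLabeling V k)]
  exact fun h => hdeg (lexProd_bot_adj G |>.1 hpq) (Nat.eq_of_mul_eq_mul_right (by positivity) h)

theorem card_image_ldWeight_lexProd_bot_complementaryLabeling (hk : 0 < k) :
    (univ.image (ldWeight (lexProd G (⊥ : SimpleGraph (Fin (k + k))))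
      (complementaryLabeling V k))).card = (univ.image fun v => G.degree v).card := by
  have i : Fin (k + k) := ⟨0, by omega⟩
  have hC : k * (Fintype.card (V × Fin (k + k)) + 1) ≠ 0 := by positivity
  have hw := ldWeight_lexProd_bot G (sum_complementaryLabeling V k)
  have himage : univ.image (ldWeight (lexProd G ⊥) (complementaryLabeling V k)) =
      (univ.image fun v => G.degree v).image (· * (k * (Fintype.card (V × Fin (k + k)) + 1))) := by
    ext w
    simp only [hw, mem_image, mem_univ, true_and, Prod.exists, exists_exists_eq_and]
    exact ⟨fun ⟨v, _, h⟩ => ⟨v, h⟩, fun ⟨v, h⟩ => ⟨v, i, h⟩⟩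
  rw [himage, card_image_of_injective _ (mul_left_injective₀ hC)]

end LexProdBot

theorem IsLDAL.two_le_card_image {V : Type*} [Fintype V] {G : SimpleGraph V} {f : V → ℕ}
    (hf : IsLDAL G f) {x y : V} (hxy : G.Adj x y) : 2 ≤ (univ.image (ldWeight G f)).card :=
  Finset.one_lt_card.2 ⟨_, mem_image_of_mem _ (mem_univ x), _, mem_image_of_mem _ (mem_univ y),
    hf.2 hxy⟩

theorem chiLD_eq_two {V : Type*} [Fintype V] {G : SimpleGraph V} {x y : V} (hxy : G.Adj x y)
    {f : V → ℕ} (hf : IsLDAL G f) (h2 : (univ.image (ldWeight G f)).card = 2) : chiLD G = 2 :=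
  le_antisymm (Nat.sInf_le ⟨f, hf, h2⟩)
    (le_csInf ⟨2, f, hf, h2⟩ fun _ ⟨_, hg, hc⟩ => hc ▸ hg.two_le_card_image hxy)

section Biregular

variable {V : Type*} [Fintype V] {G : SimpleGraph V} [DecidableRel G.Adj] {s : Set V} {a b : ℕ}

theorem degree_ne_of_adj (hbip : ∀ ⦃u v⦄, G.Adj u v → (u ∈ s ↔ v ∉ s))
    (ha : ∀ v ∈ s, G.degree v = a) (hb : ∀ v ∈ sᶜ, G.degree v = b) (hab : a ≠ b)
    ⦃u v : V⦄ (huv : G.Adj u v) : G.degree u ≠ G.degree v := by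
  by_cases hu : u ∈ s
  · rw [ha u hu, hb v ((hbip huv).1 hu)]
    exact hab
  · rw [hb u hu, ha v (not_not.1 (mt (hbip huv).2 hu))]
    exact hab.symm

theorem image_degree_eq_pair (hs : s.Nonempty) (hs' : sᶜ.Nonempty)
    (ha : ∀ v ∈ s, G.degree v = a) (hb : ∀ v ∈ sᶜ, G.degree v = b) :
    (univ.image fun v => G.degree v) = {a, b} := by
  obtain ⟨v₀, hv₀⟩ := hs
  obtain ⟨v₁, hv₁⟩ := hs'
  ext d
  simp only [mem_image, mem_univ, true_and, mem_insert, mem_singleton]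
  constructor
  · rintro ⟨v, rfl⟩
    by_cases hv : v ∈ s
    exacts [Or.inl (ha v hv), Or.inr (hb v hv)]
  · rintro (rfl | rfl)
    exacts [⟨v₀, ha v₀ hv₀⟩, ⟨v₁, hb v₁ hv₁⟩]

theorem exists_adj_of_degree_ne (ha : ∀ v ∈ s, G.degree v = a) (hb : ∀ v ∈ sᶜ, G.degree v = b)
    (hs : s.Nonempty) (hs' : sᶜ.Nonempty) (hab : a ≠ b) : ∃ x y, G.Adj x y := by
  by_contra! h
  have hzero (v : V) : G.degree v = 0 := by
    by_contra hv
    obtain ⟨w, hw⟩ := G.degree_pos_iff_exists_adj v |>.1 (Nat.pos_of_ne_zero hv)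
    exact h v w hw
  obtain ⟨v₀, hv₀⟩ := hs
  obtain ⟨v₁, hv₁⟩ := hs'
  exact hab (by rw [← ha v₀ hv₀, ← hb v₁ hv₁, hzero, hzero])

end Biregular

theorem stmt_14_general {V : Type*} [Fintype V] (G : SimpleGraph V) [DecidableRel G.Adj]
    (n a b : ℕ) (hn : 2 ≤ n) (hne : Even n)
    (s : Set V) (hs : s.Nonempty) (hs' : sᶜ.Nonempty)
    (hbip : ∀ ⦃u v⦄, G.Adj u v → (u ∈ s ↔ v ∉ s))
    (ha : ∀ v ∈ s, G.degree v = a) (hb : ∀ v ∈ sᶜ, G.degree v = b)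
    (hab : a ≠ b) :
    chiLD (lexProd G (⊥ : SimpleGraph (Fin n))) = 2 := by
  obtain ⟨k, rfl⟩ := hne
  have hk : 0 < k := by omega
  obtain ⟨x, y, hxy⟩ := exists_adj_of_degree_ne ha hb hs hs' hab
  refine chiLD_eq_two (x := (x, ⟨0, by omega⟩)) (y := (y, ⟨0, by omega⟩))
    ((lexProd_bot_adj G).2 hxy)
    (isLDAL_lexProd_bot_complementaryLabeling G k hk (degree_ne_of_adj hbip ha hb hab)) ?_
  rw [card_image_ldWeight_lexProd_bot_complementaryLabeling G k hk,
    image_degree_eq_pair hs hs' ha hb, card_pair hab]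

theorem stmt_14 {V : Type*} [Fintype V] (G : SimpleGraph V) [DecidableRel G.Adj]
    (n m a b : ℕ) (hn : 2 ≤ n) (hne : Even n) (hm : 1 < m)
    (hcard : Fintype.card V = m)
    (s : Set V) (hs : s.Nonempty) (hs' : sᶜ.Nonempty)
    (hbip : ∀ ⦃u v⦄, G.Adj u v → (u ∈ s ↔ v ∉ s))
    (ha : ∀ v ∈ s, G.degree v = a) (hb : ∀ v ∈ sᶜ, G.degree v = b)
    (hab : a ≠ b) :
    chiLD (lexProd G (⊥ : SimpleGraph (Fin n))) = 2 :=
  stmt_14_general G n a b hn hne s hs hs' hbip ha hb hab
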